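/- Let K be a separable complex Hilbert space, let (x_n)_{n∈ℕ} and (y_n)_{n∈ℕ} be orthonormal sequences in K, and let (a_n)_{n∈ℕ} and (b_n)_{n∈ℕ} be nonincreasing sequences of strictly positive real numbers tending to 0. Let A and B be the compact positive operators on K defined by A x = ∑_n a_n ⟨x, x_n⟩ x_n and B x = ∑_n b_n ⟨x, y_n⟩ y_n (so that a_n and b_n are the singular values of A and B). Put H = K ⊕ K. Then the following are equivalent: (i) there exists a linear isometric isomorphism from ker A onto ker B (i.e. dim ker A = dim ker B), and there exist positive real numbers γ₁, γ₂ such that γ₁ b_n ≤ a_n ≤ γ₂ b_n for all n; (ii) the systems (H; K ⊕ 0, graph(A)) and (H; K ⊕ 0, graph(B)) are boundedly isomorphic. -/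

import Mathlib

/-!
Write `A` as the operator acting by `xₙ ↦ aₙ xₙ` and vanishing on `{xₙ}ᗮ = ker A`, and likewise
`B`. A bounded isomorphism `V` of the two systems preserves `K ⊕ 0`, so it is upper triangular;
it yields invertible `T, S` with `B T = S A` (`T x` is the first coordinate of `V (x, A x)`, `S` the
lower-right corner of `V`), and conversely `T × S` is such an isomorphism.

If `ker A ≅ ker B` via `U` and `γ₁ bₙ ≤ aₙ ≤ γ₂ bₙ`, take `S = W` and `T = D W`, where `W` sends
`xₙ` to `yₙ` and acts as `U` on `ker A`, and `D` multiplies `yₙ` by `aₙ / bₙ` and is the identity on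
`ker B`. All operators involved act by `vₙ ↦ cₙ wₙ` on the closed span of an orthonormal family and
by a fixed map on its orthogonal complement; such operators compose blockwise. Conversely, `T` maps
`ker A` isomorphically onto `ker B`, and linearly isomorphic separable Hilbert spaces are isometric.
For the bounds, `B = S A T⁻¹`: the span of `y₀, …, yₙ` contains a unit vector `u` with
`T⁻¹ u ⊥ x₀, …, xₙ₋₁` by counting dimensions, so `bₙ ≤ ‖B u‖ ≤ ‖S‖ aₙ ‖T⁻¹‖` (min-max), and symmetrically.
-/

noncomputable section

open Submodule
open scoped InnerProductSpace lp ENNReal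

variable {𝕜 ι : Type*} [RCLike 𝕜]

namespace lp

theorem norm_le_mul_norm_of_forall {f g : ℓ²(ι, 𝕜)} {α : ℝ} (hα : 0 ≤ α)
    (h : ∀ i, ‖f i‖ ≤ α * ‖g i‖) : ‖f‖ ≤ α * ‖g‖ := by
  have key : ‖f‖ ≤ ‖(α : 𝕜) • g‖ := lp.norm_mono two_ne_zero fun i => by
    simpa [norm_smul, abs_of_nonneg hα] using h i
  simpa [norm_smul, abs_of_nonneg hα] using key

theorem mul_norm_le_of_forall {f g : ℓ²(ι, 𝕜)} {α : ℝ} (hα : 0 ≤ α)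
    (h : ∀ i, α * ‖g i‖ ≤ ‖f i‖) : α * ‖g‖ ≤ ‖f‖ := by
  have key : ‖(α : 𝕜) • g‖ ≤ ‖f‖ := lp.norm_mono two_ne_zero fun i => by
    simpa [norm_smul, abs_of_nonneg hα] using h i
  simpa [norm_smul, abs_of_nonneg hα] using key

theorem memℓp_mul {p : ℝ≥0∞} (c : ℓ^∞(ι, 𝕜)) (f : ℓ^p(ι, 𝕜)) : Memℓp (⇑c * ⇑f) p :=
  ((lp.memℓp f).norm.const_mul ‖c‖).mono fun i =>
    (norm_mul_le _ _).trans (by gcongr; exact lp.norm_apply_le_norm ENNReal.top_ne_zero c i)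

def diagonal (c : ℓ^∞(ι, 𝕜)) : ℓ²(ι, 𝕜) →L[𝕜] ℓ²(ι, 𝕜) :=
  LinearMap.mkContinuous
    { toFun := fun f => ⟨⇑c * ⇑f, memℓp_mul c f⟩
      map_add' := fun f g => lp.ext <| by simp only [lp.coeFn_add]; exact mul_add _ _ _
      map_smul' := fun r f => lp.ext <| by ext i; simp [mul_left_comm] }
    ‖c‖ fun f => norm_le_mul_norm_of_forall (norm_nonneg c) fun i =>
      (norm_mul_le _ _).trans (by gcongr; exact lp.norm_apply_le_norm ENNReal.top_ne_zero c i)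

@[simp]
theorem diagonal_apply (c : ℓ^∞(ι, 𝕜)) (f : ℓ²(ι, 𝕜)) (i : ι) : diagonal c f i = c i * f i := rfl

theorem diagonal_mul (c d : ℓ^∞(ι, 𝕜)) : diagonal (c * d) = diagonal c ∘L diagonal d := by
  ext f i
  simp [mul_assoc]

@[simp]
theorem diagonal_one : diagonal (1 : ℓ^∞(ι, 𝕜)) = ContinuousLinearMap.id 𝕜 _ := by
  ext f i
  simp

theorem exists_unit_coe_eq {c : ι → 𝕜} (hc : BddAbove (Set.range fun i => ‖c i‖))
    (hc' : BddAbove (Set.range fun i => ‖(c i)⁻¹‖)) (hc0 : ∀ i, c i ≠ 0) :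
    ∃ r : (ℓ^∞(ι, 𝕜))ˣ, ⇑(r : ℓ^∞(ι, 𝕜)) = c := by
  refine ⟨⟨⟨c, memℓp_infty hc⟩, ⟨fun i => (c i)⁻¹, memℓp_infty hc'⟩, ?_, ?_⟩, rfl⟩ <;>
    ext i <;> simp [hc0 i]

end lp

theorem Antitone.exists_lp_infty_coe_eq {c : ℕ → ℝ} (hc : Antitone c) (hc0 : ∀ n, 0 ≤ c n) :
    ∃ γ : ℓ^∞(ℕ, 𝕜), ∀ n, γ n = c n :=
  ⟨⟨fun n => (c n : 𝕜), memℓp_infty ⟨c 0, by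
    rintro _ ⟨n, rfl⟩
    simpa [abs_of_nonneg (hc0 n)] using hc (Nat.zero_le n)⟩⟩, fun _ => rfl⟩

section Normed

variable {E F E' F' : Type*} [NormedAddCommGroup E] [NormedSpace 𝕜 E]
  [NormedAddCommGroup F] [NormedSpace 𝕜 F] [NormedAddCommGroup E'] [NormedSpace 𝕜 E']
  [NormedAddCommGroup F'] [NormedSpace 𝕜 F']

theorem ContinuousLinearEquiv.norm_coe_pos [Nontrivial E] (e : E ≃L[𝕜] F) :
    0 < ‖(e : E →L[𝕜] F)‖ := by
  obtain ⟨x, hx⟩ := exists_ne (0 : E)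
  exact norm_pos_iff.2 fun h => hx (e.injective (by simpa using congr($h x)))

theorem le_opNorm_mul_mul_opNorm_of_eq_comp {A : E →L[𝕜] E'} {B : F →L[𝕜] F'}
    {S : E' →L[𝕜] F'} {T : F →L[𝕜] E} (hB : B = S ∘L A ∘L T) {W : Submodule 𝕜 F}
    [FiniteDimensional 𝕜 W] {n : ℕ} (hW : n < Module.finrank 𝕜 W) {α β : ℝ} (hα : 0 ≤ α)
    (hBW : ∀ x ∈ W, β * ‖x‖ ≤ ‖B x‖) (φ : Fin n → E →L[𝕜] 𝕜)
    (hAφ : ∀ y, (∀ i, φ i y = 0) → ‖A y‖ ≤ α * ‖y‖) :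
    β ≤ ‖S‖ * α * ‖T‖ := by
  let ψ : W →ₗ[𝕜] Fin n → 𝕜 :=
    LinearMap.pi fun i => ((φ i ∘L T : F →L[𝕜] 𝕜) : F →ₗ[𝕜] 𝕜) ∘ₗ W.subtype
  obtain ⟨x, hxψ, hx0⟩ := Submodule.exists_mem_ne_zero_of_ne_bot
    (LinearMap.ker_ne_bot_of_finrank_lt (f := ψ) (by simpa using hW))
  have hAx : ‖A (T x)‖ ≤ α * ‖T x‖ := hAφ _ fun i => congr_fun hxψ i
  have hx : 0 < ‖(x : F)‖ := norm_pos_iff.2 (by simpa using hx0)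
  refine le_of_mul_le_mul_right ?_ hx
  calc β * ‖(x : F)‖ ≤ ‖S (A (T x))‖ := by simpa [hB] using hBW x x.2
    _ ≤ ‖S‖ * (α * ‖T x‖) := (S.le_opNorm _).trans (by gcongr)
    _ ≤ ‖S‖ * (α * (‖T‖ * ‖(x : F)‖)) := by gcongr; exact T.le_opNorm _
    _ = ‖S‖ * α * ‖T‖ * ‖(x : F)‖ := by ring

end Normed

section Graph

variable {R E F G H : Type*} [Semiring R]
  [TopologicalSpace E] [AddCommMonoid E] [Module R E] [TopologicalSpace F] [AddCommMonoid F]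
  [Module R F] [TopologicalSpace G] [AddCommMonoid G] [Module R G] [TopologicalSpace H]
  [AddCommMonoid H] [Module R H] {A : E →L[R] F} {B : G →L[R] H} {V : (E × F) ≃L[R] (G × H)}

namespace ContinuousLinearEquiv

theorem apply_mk_apply_of_image_graph
    (hV : V '' (LinearMap.graph (A : E →ₗ[R] F) : Set (E × F)) = LinearMap.graph (B : G →ₗ[R] H))
    (x : E) : V (x, A x) = ((V (x, A x)).1, B (V (x, A x)).1) := by
  have : V (x, A x) ∈ (LinearMap.graph (B : G →ₗ[R] H) : Set (G × H)) :=
    hV ▸ Set.mem_image_of_mem V (by simp [LinearMap.mem_graph_iff])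
  exact Prod.ext rfl ((LinearMap.mem_graph_iff _ _).1 this)

theorem snd_apply_mk_zero_of_image_prod_bot
    (hV : V '' ((⊤ : Submodule R E).prod (⊥ : Submodule R F) : Set (E × F))
      = ((⊤ : Submodule R G).prod (⊥ : Submodule R H) : Set (G × H))) (x : E) :
    (V (x, 0)).2 = 0 := by
  have : V (x, 0) ∈ ((⊤ : Submodule R G).prod (⊥ : Submodule R H) : Set (G × H)) :=
    hV ▸ Set.mem_image_of_mem V (by simp)
  simpa using this

theorem snd_symm_apply_zero_snd_apply_zero (hV : ∀ g, (V.symm (g, 0)).2 = 0) (y : F) :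
    (V.symm (0, (V (0, y)).2)).2 = y := by
  have hsplit : V (0, y) = ((V (0, y)).1, 0) + (0, (V (0, y)).2) := by simp
  have := congr_arg (fun p => (V.symm p).2) hsplit
  rw [map_add, Prod.snd_add, hV, zero_add, symm_apply_apply] at this
  exact this.symm

end ContinuousLinearEquiv

open ContinuousLinearEquiv ContinuousLinearMap in
theorem exists_image_prod_bot_graph_iff :
    (∃ V : (E × F) ≃L[R] (G × H),
        V '' ((⊤ : Submodule R E).prod (⊥ : Submodule R F) : Set (E × F))
          = ((⊤ : Submodule R G).prod (⊥ : Submodule R H) : Set (G × H)) ∧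
        V '' (LinearMap.graph (A : E →ₗ[R] F) : Set (E × F)) = LinearMap.graph (B : G →ₗ[R] H)) ↔
      ∃ (T : E ≃L[R] G) (S : F ≃L[R] H), B ∘L (T : E →L[R] G) = (S : F →L[R] H) ∘L A := by
  constructor
  · rintro ⟨V, hP, hG⟩
    have hP' := V.symm_image_image ((⊤ : Submodule R E).prod (⊥ : Submodule R F))
    have hG' := V.symm_image_image (LinearMap.graph (A : E →ₗ[R] F))
    rw [hP] at hP'
    rw [hG] at hG'
    let T := fst R G H ∘L (V : (E × F) →L[R] (G × H)) ∘L (ContinuousLinearMap.id R E).prod A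
    let T' := fst R E F ∘L (V.symm : (G × H) →L[R] (E × F)) ∘L (ContinuousLinearMap.id R G).prod B
    let S := snd R G H ∘L (V : (E × F) →L[R] (G × H)) ∘L inr R E F
    let S' := snd R E F ∘L (V.symm : (G × H) →L[R] (E × F)) ∘L inr R G H
    refine ⟨equivOfInverse T T' (fun x => ?_) (fun g => ?_),
      equivOfInverse S S' (snd_symm_apply_zero_snd_apply_zero
        (snd_apply_mk_zero_of_image_prod_bot hP'))
      (snd_symm_apply_zero_snd_apply_zero (V := V.symm) (by
        simpa using snd_apply_mk_zero_of_image_prod_bot hP)), ?_⟩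
    · simp [T, T', ← apply_mk_apply_of_image_graph hG]
    · simp [T, T', ← apply_mk_apply_of_image_graph hG']
    · ext x
      have hsplit : V (x, A x) = V (x, 0) + V (0, A x) := by rw [← _root_.map_add]; simp
      have := congr_arg Prod.snd hsplit
      rw [apply_mk_apply_of_image_graph hG, Prod.snd_add,
        snd_apply_mk_zero_of_image_prod_bot hP, zero_add] at this
      exact this
  · rintro ⟨T, S, hBT⟩
    refine ⟨T.prodCongr S, ?_, ?_⟩
    · ext ⟨g, h⟩
      simp [ContinuousLinearEquiv.image_eq_preimage_symm]
    · ext ⟨g, h⟩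
      have hB : B g = S (A (T.symm g)) := by simpa using congr($hBT (T.symm g))
      simp [ContinuousLinearEquiv.image_eq_preimage_symm, LinearMap.mem_graph_iff, hB,
        ContinuousLinearEquiv.symm_apply_eq]

end Graph

theorem LinearMap.map_ker_eq_ker_of_comp_eq {R M M' N N' : Type*} [Semiring R]
    [AddCommMonoid M] [AddCommMonoid M'] [AddCommMonoid N] [AddCommMonoid N'] [Module R M]
    [Module R M'] [Module R N] [Module R N'] {A : M →ₗ[R] N} {B : M' →ₗ[R] N'} (T : M ≃ₗ[R] M')
    (S : N ≃ₗ[R] N') (h : B ∘ₗ (T : M →ₗ[R] M') = (S : N →ₗ[R] N') ∘ₗ A) :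
    (LinearMap.ker A).map (T : M →ₗ[R] M') = LinearMap.ker B := by
  ext y
  have hy : B y = S (A (T.symm y)) := by simpa using LinearMap.congr_fun h (T.symm y)
  rw [Submodule.mem_map_equiv, LinearMap.mem_ker, LinearMap.mem_ker, hy, S.map_eq_zero_iff]

section InnerProductSpace

open TopologicalSpace

variable {E F G : Type*} [NormedAddCommGroup E] [InnerProductSpace 𝕜 E]
  [NormedAddCommGroup F] [InnerProductSpace 𝕜 F] [NormedAddCommGroup G] [InnerProductSpace 𝕜 G]

theorem Submodule.mem_orthogonal_span_range_iff {v : ι → E} {x : E} :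
    x ∈ (span 𝕜 (Set.range v))ᗮ ↔ ∀ i, ⟪v i, x⟫_𝕜 = 0 := by
  rw [← span_singleton_le_iff_mem, ← IsOrtho, isOrtho_span]
  simp [inner_eq_zero_symm (x := x)]

theorem Orthonormal.countable [SeparableSpace E] {v : ι → E} (hv : Orthonormal 𝕜 v) :
    Countable ι := by
  refine Pairwise.countable_of_isOpen_disjoint (s := fun i => Metric.ball (v i) (1 / 2))
    (fun i j hij => Metric.ball_disjoint_ball ?_) (fun _ => Metric.isOpen_ball)
    (fun i => ⟨v i, Metric.mem_ball_self (by norm_num)⟩)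
  have h2 : ‖v i - v j‖ ^ 2 = 2 := by
    rw [@norm_sub_sq 𝕜]
    simp [hv.1 i, hv.1 j, hv.2 hij]
    norm_num
  rw [dist_eq_norm]
  nlinarith [norm_nonneg (v i - v j)]

variable [CompleteSpace E] [CompleteSpace F] [CompleteSpace G]

theorem nonempty_linearIsometryEquiv_lp_of_not_finiteDimensional [SeparableSpace E]
    (hE : ¬FiniteDimensional 𝕜 E) : Nonempty (E ≃ₗᵢ[𝕜] ℓ²(ℕ, 𝕜)) := by
  obtain ⟨s, b, -⟩ := exists_hilbertBasis 𝕜 E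
  have : Countable s := b.orthonormal.countable
  have : Infinite s := not_finite_iff_infinite.1 fun _ =>
    have := Fintype.ofFinite s
    hE (.of_basis b.toOrthonormalBasis.toBasis)
  obtain ⟨e⟩ := nonempty_equiv_of_countable (α := ℕ) (β := s)
  have hdense : ⊤ ≤ (span 𝕜 (Set.range (b ∘ e))).topologicalClosure := by
    rw [EquivLike.range_comp, b.dense_span]
  exact ⟨(HilbertBasis.mk (b.orthonormal.comp e e.injective) hdense).repr⟩

theorem nonempty_linearIsometryEquiv_of_linearEquiv [SeparableSpace E] [SeparableSpace F]
    (L : E ≃ₗ[𝕜] F) : Nonempty (E ≃ₗᵢ[𝕜] F) := by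
  by_cases hE : FiniteDimensional 𝕜 E
  · have := L.finiteDimensional
    exact ⟨((stdOrthonormalBasis 𝕜 E).reindex (finCongr L.finrank_eq)).repr.trans
      (stdOrthonormalBasis 𝕜 F).repr.symm⟩
  · have hF : ¬FiniteDimensional 𝕜 F := fun _ => hE L.symm.finiteDimensional
    obtain ⟨eE⟩ := nonempty_linearIsometryEquiv_lp_of_not_finiteDimensional hE
    obtain ⟨eF⟩ := nonempty_linearIsometryEquiv_lp_of_not_finiteDimensional hF
    exact ⟨eE.trans eF.symm⟩

theorem nonempty_ker_linearIsometryEquiv_of_comp_eq [SeparableSpace E] [SeparableSpace F]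
    {E' F' : Type*} [NormedAddCommGroup E'] [NormedSpace 𝕜 E'] [NormedAddCommGroup F']
    [NormedSpace 𝕜 F'] {A : E →L[𝕜] E'} {B : F →L[𝕜] F'} (T : E ≃L[𝕜] F) (S : E' ≃L[𝕜] F')
    (h : B ∘L (T : E →L[𝕜] F) = (S : E' →L[𝕜] F') ∘L A) :
    Nonempty (LinearMap.ker (A : E →ₗ[𝕜] E') ≃ₗᵢ[𝕜] LinearMap.ker (B : F →ₗ[𝕜] F')) := by
  have : CompleteSpace (LinearMap.ker (A : E →ₗ[𝕜] E')) := A.isClosed_ker.completeSpace_coe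
  have : CompleteSpace (LinearMap.ker (B : F →ₗ[𝕜] F')) := B.isClosed_ker.completeSpace_coe
  exact nonempty_linearIsometryEquiv_of_linearEquiv <|
    (T.toLinearEquiv.submoduleMap _).trans <| LinearEquiv.ofEq _ _ <|
      LinearMap.map_ker_eq_ker_of_comp_eq T.toLinearEquiv S.toLinearEquiv congr(($h : E →ₗ[𝕜] F'))

namespace Orthonormal

section Index

variable {v : ι → E} {w : ι → F} {u : ι → G}
  (hv : Orthonormal 𝕜 v) (hw : Orthonormal 𝕜 w) (hu : Orthonormal 𝕜 u)

def synthesis : ℓ²(ι, 𝕜) →L[𝕜] E :=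
  hv.orthogonalFamily.linearIsometry.toContinuousLinearMap

def coeffs : E →L[𝕜] ℓ²(ι, 𝕜) :=
  hv.synthesis.adjoint

theorem synthesis_apply (f : ℓ²(ι, 𝕜)) : hv.synthesis f = ∑' i, f i • v i := by
  simp [synthesis, OrthogonalFamily.linearIsometry_apply]

theorem norm_synthesis (f : ℓ²(ι, 𝕜)) : ‖hv.synthesis f‖ = ‖f‖ :=
  hv.orthogonalFamily.linearIsometry.norm_map f

@[simp]
theorem coeffs_synthesis (f : ℓ²(ι, 𝕜)) : hv.coeffs (hv.synthesis f) = f :=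
  congr($(hv.orthogonalFamily.linearIsometry.adjoint_comp_self) f)

@[simp]
theorem coeffs_apply (x : E) (i : ι) : hv.coeffs x i = ⟪v i, x⟫_𝕜 := by
  classical
  calc hv.coeffs x i = ⟪lp.single 2 i (1 : 𝕜), hv.coeffs x⟫_𝕜 := by simp [lp.inner_single_left]
    _ = ⟪hv.synthesis (lp.single 2 i 1), x⟫_𝕜 := ContinuousLinearMap.adjoint_inner_right _ _ _
    _ = ⟪v i, x⟫_𝕜 := by simp [synthesis, hv.orthogonalFamily.linearIsometry_apply_single]

theorem norm_coeffs_le (x : E) : ‖hv.coeffs x‖ ≤ ‖x‖ := by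
  refine (hv.coeffs.le_opNorm x).trans (mul_le_of_le_one_left (norm_nonneg x) ?_)
  rw [coeffs, ContinuousLinearMap.adjoint.norm_map]
  exact hv.orthogonalFamily.linearIsometry.norm_toContinuousLinearMap_le

theorem coeffs_eq_zero_iff {x : E} : hv.coeffs x = 0 ↔ x ∈ (span 𝕜 (Set.range v))ᗮ := by
  rw [mem_orthogonal_span_range_iff, lp.eq_zero_iff_coeFn_eq_zero, funext_iff]
  simp

@[simp]
theorem coeffs_coe_orthogonal (y : (span 𝕜 (Set.range v))ᗮ) : hv.coeffs y = 0 :=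
  hv.coeffs_eq_zero_iff.2 y.2

theorem synthesis_mem_orthogonal_orthogonal (f : ℓ²(ι, 𝕜)) :
    hv.synthesis f ∈ (span 𝕜 (Set.range v))ᗮᗮ := fun u hu => by
  rw [← ContinuousLinearMap.adjoint_inner_left, ← coeffs, hv.coeffs_eq_zero_iff.2 hu,
    inner_zero_left]

@[simp]
theorem orthogonalProjectionOnto_synthesis (f : ℓ²(ι, 𝕜)) :
    (span 𝕜 (Set.range v))ᗮ.orthogonalProjectionOnto (hv.synthesis f) = 0 :=
  orthogonalProjectionOnto_apply_of_mem_orthogonal (hv.synthesis_mem_orthogonal_orthogonal f)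

theorem starProjection_add_synthesis_coeffs (x : E) :
    (span 𝕜 (Set.range v))ᗮ.starProjection x + hv.synthesis (hv.coeffs x) = x := by
  rw [eq_starProjection_of_mem_orthogonal' (hv.coeffs_eq_zero_iff.1 ?_)
    (hv.synthesis_mem_orthogonal_orthogonal _) (sub_add_cancel x _).symm, sub_add_cancel]
  simp

theorem norm_coeffs_of_mem_span {x : E} (hx : x ∈ span 𝕜 (Set.range v)) :
    ‖hv.coeffs x‖ = ‖x‖ := by
  have hP : (span 𝕜 (Set.range v))ᗮ.starProjection x = 0 :=
    (starProjection_apply_eq_zero_iff _).2 (le_orthogonal_orthogonal _ hx)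
  conv_rhs => rw [← hv.starProjection_add_synthesis_coeffs x, hP, zero_add, norm_synthesis]

def diagonalMap (U : (span 𝕜 (Set.range v))ᗮ →L[𝕜] (span 𝕜 (Set.range w))ᗮ)
    (c : ℓ^∞(ι, 𝕜)) : E →L[𝕜] F :=
  (span 𝕜 (Set.range w))ᗮ.subtypeL ∘L U ∘L (span 𝕜 (Set.range v))ᗮ.orthogonalProjectionOnto
    + hw.synthesis ∘L lp.diagonal c ∘L hv.coeffs

theorem diagonalMap_apply (U : (span 𝕜 (Set.range v))ᗮ →L[𝕜] (span 𝕜 (Set.range w))ᗮ)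
    (c : ℓ^∞(ι, 𝕜)) (x : E) :
    hv.diagonalMap hw U c x = U ((span 𝕜 (Set.range v))ᗮ.orthogonalProjectionOnto x)
      + ∑' i, (c i * ⟪v i, x⟫_𝕜) • w i := by
  simp [diagonalMap, synthesis_apply]

theorem diagonalMap_comp (U : (span 𝕜 (Set.range v))ᗮ →L[𝕜] (span 𝕜 (Set.range w))ᗮ)
    (U' : (span 𝕜 (Set.range w))ᗮ →L[𝕜] (span 𝕜 (Set.range u))ᗮ) (c c' : ℓ^∞(ι, 𝕜)) :
    hw.diagonalMap hu U' c' ∘L hv.diagonalMap hw U c = hv.diagonalMap hu (U' ∘L U) (c' * c) := by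
  ext x
  simp [diagonalMap, lp.diagonal_mul]

@[simp]
theorem diagonalMap_id :
    hv.diagonalMap hv (ContinuousLinearMap.id 𝕜 _) 1 = ContinuousLinearMap.id 𝕜 E := by
  ext x
  simpa [diagonalMap] using hv.starProjection_add_synthesis_coeffs x

theorem ker_diagonalMap_zero {c : ℓ^∞(ι, 𝕜)} (hc : ∀ i, c i ≠ 0) :
    LinearMap.ker (hv.diagonalMap hw 0 c : E →ₗ[𝕜] F) = (span 𝕜 (Set.range v))ᗮ := by
  ext x
  rw [LinearMap.mem_ker, ← hv.coeffs_eq_zero_iff, ← norm_eq_zero]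
  simp [diagonalMap, norm_synthesis, lp.eq_zero_iff_coeFn_eq_zero, funext_iff, hc]

def diagonalMapEquiv (U : (span 𝕜 (Set.range v))ᗮ ≃L[𝕜] (span 𝕜 (Set.range w))ᗮ)
    (c : (ℓ^∞(ι, 𝕜))ˣ) : E ≃L[𝕜] F :=
  ContinuousLinearEquiv.equivOfInverse' (hv.diagonalMap hw U c) (hw.diagonalMap hv U.symm ↑c⁻¹)
    (by rw [diagonalMap_comp]; simp) (by rw [diagonalMap_comp]; simp)

@[simp]
theorem coe_diagonalMapEquiv (U : (span 𝕜 (Set.range v))ᗮ ≃L[𝕜] (span 𝕜 (Set.range w))ᗮ)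
    (c : (ℓ^∞(ι, 𝕜))ˣ) :
    (hv.diagonalMapEquiv hw U c : E →L[𝕜] F) = hv.diagonalMap hw U c := rfl

theorem exists_comp_eq_of_bounds (U : (span 𝕜 (Set.range v))ᗮ ≃L[𝕜] (span 𝕜 (Set.range w))ᗮ)
    {a b : ℓ^∞(ι, 𝕜)} (hb : ∀ i, b i ≠ 0) {γ₁ γ₂ : ℝ} (hγ₁ : 0 < γ₁)
    (hγ : ∀ i, γ₁ * ‖b i‖ ≤ ‖a i‖ ∧ ‖a i‖ ≤ γ₂ * ‖b i‖) :
    ∃ T S : E ≃L[𝕜] F,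
      hw.diagonalMap hw 0 b ∘L (T : E →L[𝕜] F) = (S : E →L[𝕜] F) ∘L hv.diagonalMap hv 0 a := by
  have ha : ∀ i, a i ≠ 0 := fun i =>
    norm_ne_zero_iff.1 ((mul_pos hγ₁ (norm_pos_iff.2 (hb i))).trans_le (hγ i).1).ne'
  obtain ⟨r, hr⟩ := lp.exists_unit_coe_eq (c := fun i => a i / b i)
    ⟨γ₂, by
      rintro _ ⟨i, rfl⟩
      simpa [div_le_iff₀ (norm_pos_iff.2 (hb i))] using (hγ i).2⟩
    ⟨γ₁⁻¹, by
      rintro _ ⟨i, rfl⟩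
      simpa [le_inv_mul_iff₀ hγ₁, div_le_iff₀ (norm_pos_iff.2 (ha i)), mul_comm] using (hγ i).1⟩
    (fun i => div_ne_zero (ha i) (hb i))
  have hbr : b * r = a := by
    ext i
    simp [lp.infty_coeFn_mul, hr, mul_div_cancel₀ _ (hb i)]
  refine ⟨(hv.diagonalMapEquiv hw U 1).trans (hw.diagonalMapEquiv hw (.refl 𝕜 _) r),
    hv.diagonalMapEquiv hw U 1, ?_⟩
  rw [← ContinuousLinearEquiv.comp_coe, coe_diagonalMapEquiv, coe_diagonalMapEquiv,
    ← ContinuousLinearMap.comp_assoc, diagonalMap_comp, diagonalMap_comp, diagonalMap_comp, hbr]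
  simp

end Index

section Nat

variable {v : ℕ → E} {w : ℕ → F} (hv : Orthonormal 𝕜 v) (hw : Orthonormal 𝕜 w)

theorem norm_diagonalMap_zero_le {c : ℓ^∞(ℕ, 𝕜)} (hc : Antitone fun i => ‖c i‖) {n : ℕ} {x : E}
    (hx : ∀ i < n, ⟪v i, x⟫_𝕜 = 0) : ‖hv.diagonalMap hw 0 c x‖ ≤ ‖c n‖ * ‖x‖ := by
  have hdiag : ‖lp.diagonal c (hv.coeffs x)‖ ≤ ‖c n‖ * ‖hv.coeffs x‖ :=
    lp.norm_le_mul_norm_of_forall (norm_nonneg _) fun i => by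
      rcases lt_or_ge i n with hi | hi
      · simp [hx i hi]
      · simpa [norm_mul] using mul_le_mul_of_nonneg_right (hc hi) (norm_nonneg _)
  simpa [diagonalMap, norm_synthesis] using
    hdiag.trans (mul_le_mul_of_nonneg_left (hv.norm_coeffs_le x) (norm_nonneg _))

theorem le_norm_diagonalMap_zero {c : ℓ^∞(ℕ, 𝕜)} (hc : Antitone fun i => ‖c i‖) {n : ℕ} {x : E}
    (hx : x ∈ span 𝕜 (Set.range fun i : Fin (n + 1) => v i)) :
    ‖c n‖ * ‖x‖ ≤ ‖hv.diagonalMap hw 0 c x‖ := by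
  have hxv : ∀ i, n < i → ⟪v i, x⟫_𝕜 = 0 := fun i hi =>
    (mem_orthogonal_singleton_iff_inner_right).1 <| (span_le.2 <| by
      rintro _ ⟨j, rfl⟩
      exact (mem_orthogonal_singleton_iff_inner_right).2 (hv.2 (by omega))) hx
  have hdiag : ‖c n‖ * ‖hv.coeffs x‖ ≤ ‖lp.diagonal c (hv.coeffs x)‖ :=
    lp.mul_norm_le_of_forall (norm_nonneg _) fun i => by
      rcases le_or_gt i n with hi | hi
      · simpa [norm_mul] using mul_le_mul_of_nonneg_right (hc hi) (norm_nonneg _)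
      · simp [hxv i hi]
  have hspan : span 𝕜 (Set.range fun i : Fin (n + 1) => v i) ≤ span 𝕜 (Set.range v) :=
    span_mono (Set.range_comp_subset_range _ _)
  simpa [diagonalMap, norm_synthesis, hv.norm_coeffs_of_mem_span (hspan hx)] using hdiag

theorem norm_le_of_diagonalMap_eq_comp {a b : ℓ^∞(ℕ, 𝕜)} (ha : Antitone fun i => ‖a i‖)
    (hb : Antitone fun i => ‖b i‖) {S : E →L[𝕜] F} {T : F →L[𝕜] E}
    (h : hw.diagonalMap hw 0 b = S ∘L hv.diagonalMap hv 0 a ∘L T) (n : ℕ) :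
    ‖b n‖ ≤ ‖S‖ * ‖a n‖ * ‖T‖ := by
  have hLI : LinearIndependent 𝕜 fun i : Fin (n + 1) => w i :=
    hw.linearIndependent.comp _ Fin.val_injective
  have := FiniteDimensional.span_of_finite 𝕜 (Set.finite_range fun i : Fin (n + 1) => w i)
  refine le_opNorm_mul_mul_opNorm_of_eq_comp h (W := span 𝕜 (Set.range fun i : Fin (n + 1) => w i))
    (by rw [finrank_span_eq_card hLI]; simp) (norm_nonneg _)
    (fun x hx => hw.le_norm_diagonalMap_zero hw hb hx) (fun i => innerSL 𝕜 (v i))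
    (fun y hy => hv.norm_diagonalMap_zero_le hv ha fun i hi => hy ⟨i, hi⟩)

theorem exists_bounds_of_comp_eq {a b : ℓ^∞(ℕ, 𝕜)} (ha : Antitone fun i => ‖a i‖)
    (hb : Antitone fun i => ‖b i‖) (T S : E ≃L[𝕜] F)
    (h : hw.diagonalMap hw 0 b ∘L (T : E →L[𝕜] F) = (S : E →L[𝕜] F) ∘L hv.diagonalMap hv 0 a) :
    ∃ γ₁ γ₂ : ℝ, 0 < γ₁ ∧ 0 < γ₂ ∧ ∀ n, γ₁ * ‖b n‖ ≤ ‖a n‖ ∧ ‖a n‖ ≤ γ₂ * ‖b n‖ := by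
  have : Nontrivial E := ⟨v 0, 0, hv.ne_zero 0⟩
  have : Nontrivial F := ⟨w 0, 0, hw.ne_zero 0⟩
  have hB : hw.diagonalMap hw 0 b =
      (S : E →L[𝕜] F) ∘L hv.diagonalMap hv 0 a ∘L (T.symm : F →L[𝕜] E) := by
    ext x
    simpa using congr($h (T.symm x))
  have hA : hv.diagonalMap hv 0 a =
      (S.symm : F →L[𝕜] E) ∘L hw.diagonalMap hw 0 b ∘L (T : E →L[𝕜] F) := by
    ext x
    simpa using congr(S.symm ($h x)).symm
  have hST : 0 < ‖(S : E →L[𝕜] F)‖ * ‖(T.symm : F →L[𝕜] E)‖ :=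
    mul_pos S.norm_coe_pos T.symm.norm_coe_pos
  refine ⟨(‖(S : E →L[𝕜] F)‖ * ‖(T.symm : F →L[𝕜] E)‖)⁻¹,
    ‖(S.symm : F →L[𝕜] E)‖ * ‖(T : E →L[𝕜] F)‖, inv_pos.2 hST,
    mul_pos S.symm.norm_coe_pos T.norm_coe_pos, fun n => ⟨?_, ?_⟩⟩
  · rw [inv_mul_le_iff₀ hST, mul_right_comm]
    exact norm_le_of_diagonalMap_eq_comp hv hw ha hb hB n
  · rw [mul_right_comm]
    exact norm_le_of_diagonalMap_eq_comp hw hv hb ha hA n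

end Nat

end Orthonormal

end InnerProductSpace

end

theorem graphs_of_compact_positive_operators_boundedly_isomorphic_iff
    {K : Type*} [NormedAddCommGroup K] [InnerProductSpace ℂ K] [CompleteSpace K]
    [TopologicalSpace.SeparableSpace K]
    (xseq yseq : ℕ → K) (hx : Orthonormal ℂ xseq) (hy : Orthonormal ℂ yseq)
    (a b : ℕ → ℝ)
    (ha_anti : Antitone a) (hb_anti : Antitone b)
    (ha_pos : ∀ n, 0 < a n) (hb_pos : ∀ n, 0 < b n)
    (A B : K →L[ℂ] K)
    (hA : ∀ x : K, A x = ∑' n : ℕ, ((a n : ℂ) * (inner ℂ (xseq n) x : ℂ)) • xseq n)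
    (hB : ∀ x : K, B x = ∑' n : ℕ, ((b n : ℂ) * (inner ℂ (yseq n) x : ℂ)) • yseq n) :
    ((Nonempty ((LinearMap.ker (A : K →ₗ[ℂ] K)) ≃ₗᵢ[ℂ] (LinearMap.ker (B : K →ₗ[ℂ] K)))) ∧
      ∃ γ₁ γ₂ : ℝ, 0 < γ₁ ∧ 0 < γ₂ ∧ ∀ n, γ₁ * b n ≤ a n ∧ a n ≤ γ₂ * b n)
    ↔ (∃ V : (K × K) ≃L[ℂ] (K × K),
        V '' (((⊤ : Submodule ℂ K).prod (⊥ : Submodule ℂ K)) : Set (K × K)) =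
          (((⊤ : Submodule ℂ K).prod (⊥ : Submodule ℂ K)) : Set (K × K)) ∧
        V '' ((LinearMap.graph (A : K →ₗ[ℂ] K)) : Set (K × K)) =
          ((LinearMap.graph (B : K →ₗ[ℂ] K)) : Set (K × K))) := by
  obtain ⟨α, hα⟩ := ha_anti.exists_lp_infty_coe_eq (𝕜 := ℂ) fun n => (ha_pos n).le
  obtain ⟨β, hβ⟩ := hb_anti.exists_lp_infty_coe_eq (𝕜 := ℂ) fun n => (hb_pos n).le
  have hnα : ∀ n, ‖α n‖ = a n := fun n => by simp [hα, (ha_pos n).le]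
  have hnβ : ∀ n, ‖β n‖ = b n := fun n => by simp [hβ, (hb_pos n).le]
  obtain rfl : A = hx.diagonalMap hx 0 α := by ext z; simp [hA, Orthonormal.diagonalMap_apply, hα]
  obtain rfl : B = hy.diagonalMap hy 0 β := by ext z; simp [hB, Orthonormal.diagonalMap_apply, hβ]
  rw [exists_image_prod_bot_graph_iff]
  simp_rw [← hnα, ← hnβ]
  constructor
  · rintro ⟨⟨U⟩, γ₁, γ₂, hγ₁, -, hγ⟩
    rw [hx.ker_diagonalMap_zero hx (fun n => by simp [hα, (ha_pos n).ne']),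
      hy.ker_diagonalMap_zero hy (fun n => by simp [hβ, (hb_pos n).ne'])] at U
    exact hx.exists_comp_eq_of_bounds hy U.toContinuousLinearEquiv
      (fun n => by simp [hβ, (hb_pos n).ne']) hγ₁ hγ
  · rintro ⟨T, S, h⟩
    exact ⟨nonempty_ker_linearIsometryEquiv_of_comp_eq T S h,
      hx.exists_bounds_of_comp_eq hy (by simpa only [hnα] using ha_anti)
        (by simpa only [hnβ] using hb_anti) T S h⟩
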